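/- arXiv:2307.06700 — 4 statements merged into one kernel-verified Lean document; each statement's English description precedes it below -/
import Mathlib

section
/- Let D be a digraph and k ≥ δ*_c(D) + 2. Then the k-dicolouring graph of D is connected, i.e., D is k-mixing. -/
variable {V : Type*}

/-- A directed cycle in the digraph with arc relation `A`: a nonempty list of
pairwise distinct vertices forming a closed directed walk. -/
def IsDicycle (A : V → V → Prop) (l : List V) : Prop :=
  l ≠ [] ∧ l.Nodup ∧ l.Chain' A ∧ ∀ x ∈ l.getLast?, ∀ y ∈ l.head?, A x y

/-- The digraph with arc relation `A` has no directed cycle. -/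
def Acyclic (A : V → V → Prop) : Prop := ¬ ∃ l : List V, IsDicycle A l

/-- `S` intersects every directed cycle of `A` containing `v`. -/
def HitsCyclesThrough (A : V → V → Prop) (v : V) (S : Finset V) : Prop :=
  ∀ l : List V, IsDicycle A l → v ∈ l → ∃ u ∈ l, u ∈ S

/-- The cycle-degree of `v`: the minimum size of a set `S ⊆ V \ {v}`
intersecting every directed cycle containing `v`. -/
noncomputable def cycleDegree (A : V → V → Prop) (v : V) : ℕ :=
  sInf { n | ∃ S : Finset V, S.card = n ∧ v ∉ S ∧ HitsCyclesThrough A v S }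

/-- `(U, E)` is a (nonempty) subdigraph of the digraph on `V` with arcs `A`. -/
def IsSubdigraph (A : V → V → Prop) (U : Finset V) (E : Finset (V × V)) : Prop :=
  U.Nonempty ∧ ∀ p ∈ E, A p.1 p.2 ∧ p.1 ∈ U ∧ p.2 ∈ U

/-- The arc relation of a finite arc set. -/
def arcRel (E : Finset (V × V)) : V → V → Prop := fun x y => (x, y) ∈ E

/-- The cycle-degeneracy of the digraph `A`: the maximum, over all subdigraphs,
of the minimum cycle-degree. -/
noncomputable def cycleDegeneracy (A : V → V → Prop) : ℕ :=
  sSup { m | ∃ (U : Finset V) (E : Finset (V × V)),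
    IsSubdigraph A U E ∧ ∀ v ∈ U, m ≤ cycleDegree (arcRel E) v }

/-- A dicolouring: every colour class induces an acyclic subdigraph. -/
def IsDicolouring {C : Type*} (A : V → V → Prop) (φ : V → C) : Prop :=
  ∀ c : C, Acyclic fun x y => A x y ∧ φ x = c ∧ φ y = c

/-- The dichromatic number: least `k` admitting a `k`-dicolouring. -/
noncomputable def dichromaticNumber (A : V → V → Prop) : ℕ :=
  sInf { k | ∃ φ : V → Fin k, IsDicolouring A φ }

/-- One step in the `k`-dicolouring graph: both are dicolourings and they
differ on exactly one vertex. -/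
def DicolStep (A : V → V → Prop) {k : ℕ} (α β : V → Fin k) : Prop :=
  IsDicolouring A α ∧ IsDicolouring A β ∧ ∃! v, α v ≠ β v

/-- `l` is (the list of successive colourings of) a redicolouring sequence from
`α` to `β`. -/
def RedicolPath (A : V → V → Prop) {k : ℕ} (α β : V → Fin k)
    (l : List (V → Fin k)) : Prop :=
  List.Chain (DicolStep A) α l ∧ (α :: l).getLast (List.cons_ne_nil _ _) = β

/-! Induct on the vertex set `W`. By definition of `δ*_c`, `D[W]` has a vertex `v` of
cycle-degree at most `δ*_c(D) ≤ k - 2`, witnessed by a set `S ∌ v` meeting every dicycle of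
`D[W]` through `v`. Any dicolouring of `W - v` extends to a dicolouring of `W` by giving `v` a
colour missing on `S`. Follow a recolouring sequence of `W - v`: before a vertex `u` is
recoloured, first move `v` to a colour missing on `S` and different from the new colour of `u`;
since `|S| + 1 < k` such a colour exists, and both moves keep a dicolouring. -/

open Function Finset Relation

section Dicycles

variable {A B : V → V → Prop} {l : List V}

lemma IsDicycle.mono (h : IsDicycle A l) (hAB : ∀ x ∈ l, ∀ y ∈ l, A x y → B x y) :
    IsDicycle B l := by
  obtain ⟨hne, hnd, hch, hw⟩ := h
  refine ⟨hne, hnd, ?_, fun x hx y hy => ?_⟩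
  · change List.IsChain A l at hch
    change List.IsChain B l
    rw [List.isChain_iff_getElem] at hch ⊢
    exact fun i hi => hAB _ (by simp) _ (by simp) (hch i hi)
  · exact hAB _ (List.mem_of_mem_getLast? hx) _ (List.mem_of_mem_head? hy) (hw x hx y hy)

lemma IsDicycle.exists_rel_of_mem (h : IsDicycle A l) {x : V} (hx : x ∈ l) :
    ∃ y ∈ l, A x y := by
  obtain ⟨hne, -, hch, hw⟩ := h
  obtain ⟨i, hi, rfl⟩ := List.getElem_of_mem hx
  by_cases hlast : i + 1 < l.length
  · exact ⟨l[i + 1], List.getElem_mem _, List.isChain_iff_getElem.1 hch i hlast⟩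
  · have : l[i] = l.getLast hne := by rw [List.getLast_eq_getElem]; congr; omega
    refine ⟨l.head hne, List.head_mem hne, this ▸ hw _ ?_ _ ?_⟩
    · rw [List.getLast?_eq_some_getLast hne]; rfl
    · rw [List.head?_eq_some_head]; rfl

lemma isDicycle_singleton {v : V} (h : A v v) : IsDicycle A [v] :=
  ⟨List.cons_ne_nil _ _, List.nodup_singleton v, List.isChain_singleton v, by simpa⟩

lemma IsDicolouring.anti {C : Type*} {φ : V → C} (hAB : ∀ x y, A x y → B x y)
    (hφ : IsDicolouring B φ) : IsDicolouring A φ :=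
  fun c ⟨l, hl⟩ => hφ c ⟨l, hl.mono fun x _ y _ hxy => ⟨hAB x y hxy.1, hxy.2⟩⟩

lemma IsDicolouring.not_rel_self {C : Type*} {φ : V → C} (hφ : IsDicolouring A φ) (v : V) :
    ¬ A v v :=
  fun h => hφ (φ v) ⟨[v], isDicycle_singleton ⟨h, rfl, rfl⟩⟩

end Dicycles

/-- The subdigraph induced on `W`, with all vertices of `V` kept; vertices outside `W` are
isolated, so their colours are unconstrained. -/
def relOn (A : V → V → Prop) (W : Finset V) : V → V → Prop :=
  fun x y => A x y ∧ x ∈ W ∧ y ∈ W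

lemma relOn_univ [Fintype V] (A : V → V → Prop) : relOn A univ = A := by
  ext x y
  simp [relOn]

lemma relOn_mono {A : V → V → Prop} {W W' : Finset V} (h : W ⊆ W') {x y : V}
    (hxy : relOn A W x y) : relOn A W' x y :=
  ⟨hxy.1, h hxy.2.1, h hxy.2.2⟩

lemma isDicolouring_relOn_empty {C : Type*} (A : V → V → Prop) (φ : V → C) :
    IsDicolouring (relOn A ∅) φ := by
  rintro c ⟨l, hl⟩
  obtain ⟨-, -, ⟨-, hx, -⟩, -⟩ := hl.exists_rel_of_mem (List.head_mem hl.1)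
  exact notMem_empty _ hx

section Recolouring

variable [DecidableEq V] {A : V → V → Prop} {k : ℕ}

lemma dicolStep_update {f : V → Fin k} {a : V} {c : Fin k} (hf : IsDicolouring A f)
    (hf' : IsDicolouring A (update f a c)) (hc : f a ≠ c) : DicolStep A f (update f a c) := by
  refine ⟨hf, hf', a, by simpa using hc, fun u hu => ?_⟩
  by_contra hua
  exact hu (update_of_ne hua c f).symm

lemma reflTransGen_dicolStep_update {f : V → Fin k} {a : V} {c : Fin k}
    (hf : IsDicolouring A f) (hf' : IsDicolouring A (update f a c)) :
    ReflTransGen (DicolStep A) f (update f a c) := by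
  by_cases hc : f a = c
  · rw [← hc, update_eq_self]
  · exact .single (dicolStep_update hf hf' hc)

lemma DicolStep.exists_eq_update {f g : V → Fin k} (h : DicolStep A f g) :
    ∃ u c, g = update f u c := by
  obtain ⟨-, -, u, -, huniq⟩ := h
  refine ⟨u, g u, funext fun w => ?_⟩
  by_cases hwu : w = u
  · rw [hwu, update_self]
  · rw [update_of_ne hwu]
    by_contra h
    exact hwu (huniq w (Ne.symm h))

lemma reflTransGen_dicolStep_of_forall_isDicolouring [Fintype V]
    (hA : ∀ φ : V → Fin k, IsDicolouring A φ) (f g : V → Fin k) :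
    ReflTransGen (DicolStep A) f g := by
  suffices ∀ s : Finset V, ∀ f : V → Fin k, (∀ u ∉ s, f u = g u) →
      ReflTransGen (DicolStep A) f g from this univ f (by simp)
  intro s
  induction s using Finset.induction_on with
  | empty => exact fun f hf => funext (fun u => hf u (notMem_empty u)) ▸ .refl
  | insert a s _ ih =>
    intro f hf
    refine (reflTransGen_dicolStep_update (a := a) (c := g a) (hA f) (hA _)).trans
      (ih _ fun u hu => ?_)
    by_cases hua : u = a
    · rw [hua, update_self]
    · rw [update_of_ne hua]
      exact hf u (by simp [hua, hu])

end Recolouring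

section CycleDegree

variable {B : V → V → Prop} {v : V}

lemma cycleDegree_le_card [Fintype V] :
    cycleDegree B v ≤ Fintype.card V := by
  rcases Set.eq_empty_or_nonempty { n | ∃ S : Finset V, S.card = n ∧ v ∉ S ∧
    HitsCyclesThrough B v S } with h | ⟨n, S, rfl, hS⟩
  · simp [cycleDegree, h]
  · exact le_trans (Nat.sInf_le ⟨S, rfl, hS⟩) (card_le_univ S)

lemma hitsCyclesThrough_univ_erase [Fintype V] [DecidableEq V] (hv : ¬ B v v) :
    HitsCyclesThrough B v (univ.erase v) := by
  intro l hl hvl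
  obtain ⟨y, hyl, hvy⟩ := hl.exists_rel_of_mem hvl
  exact ⟨y, hyl, mem_erase.2 ⟨fun h => hv (h ▸ hvy), mem_univ y⟩⟩

lemma exists_hitsCyclesThrough_card_eq_cycleDegree [Fintype V] [DecidableEq V]
    (hv : ¬ B v v) :
    ∃ S : Finset V, S.card = cycleDegree B v ∧ v ∉ S ∧ HitsCyclesThrough B v S := by
  have hne : { n | ∃ S : Finset V, S.card = n ∧ v ∉ S ∧
      HitsCyclesThrough B v S }.Nonempty :=
    ⟨_, univ.erase v, rfl, notMem_erase v univ, hitsCyclesThrough_univ_erase hv⟩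
  exact Nat.sInf_mem hne

open Classical in
noncomputable def arcsIn [Fintype V] (A : V → V → Prop) (W : Finset V) : Finset (V × V) :=
  univ.filter fun p => relOn A W p.1 p.2

lemma arcRel_arcsIn [Fintype V] (A : V → V → Prop) (W : Finset V) :
    arcRel (arcsIn A W) = relOn A W := by
  ext x y
  simp [arcRel, arcsIn]

lemma exists_cycleDegree_relOn_le_cycleDegeneracy [Fintype V] (A : V → V → Prop)
    {W : Finset V} (hW : W.Nonempty) :
    ∃ v ∈ W, cycleDegree (relOn A W) v ≤ cycleDegeneracy A := by
  by_contra! h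
  have hbdd : BddAbove { m | ∃ (U : Finset V) (E : Finset (V × V)),
      IsSubdigraph A U E ∧ ∀ v ∈ U, m ≤ cycleDegree (arcRel E) v } := by
    refine ⟨Fintype.card V, ?_⟩
    rintro m ⟨U, E, ⟨⟨u, hu⟩, -⟩, hm⟩
    exact (hm u hu).trans cycleDegree_le_card
  have hsub : IsSubdigraph A W (arcsIn A W) :=
    ⟨hW, fun p hp => by classical exact (mem_filter.1 hp).2⟩
  have := le_csSup hbdd ⟨W, arcsIn A W, hsub, fun v hv => by
    rw [arcRel_arcsIn]; exact h v hv⟩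
  exact (cycleDegeneracy A).lt_succ_self.not_ge this

end CycleDegree

lemma Fin.exists_notMem_of_card_lt {k : ℕ} {T : Finset (Fin k)} (h : T.card < k) :
    ∃ x, x ∉ T := by
  obtain ⟨x, -, hx⟩ := exists_mem_notMem_of_card_lt_card (s := T) (t := univ) (by simpa using h)
  exact ⟨x, hx⟩

lemma Finset.image_update_subset_insert {α β : Type*} [DecidableEq α] [DecidableEq β]
    (S : Finset α) (f : α → β) (a : α) (b : β) :
    S.image (update f a b) ⊆ insert b (S.image f) := by
  intro c hc
  obtain ⟨s, hs, rfl⟩ := mem_image.1 hc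
  by_cases hsa : s = a
  · simp [hsa]
  · simp only [update_of_ne hsa]
    exact mem_insert_of_mem (mem_image_of_mem f hs)

section Lifting

variable [DecidableEq V] {A : V → V → Prop} {W S : Finset V} {v : V} {k : ℕ}

lemma isDicolouring_update_of_notMem_image (hS : HitsCyclesThrough (relOn A W) v S)
    (hvS : v ∉ S) {γ : V → Fin k} (hγ : IsDicolouring (relOn A (W.erase v)) γ) {x : Fin k}
    (hx : x ∉ S.image γ) : IsDicolouring (relOn A W) (update γ v x) := by
  rintro c ⟨l, hl⟩
  by_cases hvl : v ∈ l
  · obtain ⟨u, hul, huS⟩ := hS l (hl.mono fun _ _ _ _ h => h.1) hvl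
    obtain ⟨-, -, -, hvc, -⟩ := hl.exists_rel_of_mem hvl
    obtain ⟨-, -, -, huc, -⟩ := hl.exists_rel_of_mem hul
    rw [update_self] at hvc
    rw [update_of_ne (ne_of_mem_of_not_mem huS hvS)] at huc
    exact hx (mem_image.2 ⟨u, huS, huc.trans hvc.symm⟩)
  · refine hγ c ⟨l, hl.mono fun a ha b hb h => ?_⟩
    have hav : a ≠ v := ne_of_mem_of_not_mem ha hvl
    have hbv : b ≠ v := ne_of_mem_of_not_mem hb hvl
    obtain ⟨⟨hab, haW, hbW⟩, hac, hbc⟩ := h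
    rw [update_of_ne hav] at hac
    rw [update_of_ne hbv] at hbc
    exact ⟨⟨hab, mem_erase.2 ⟨hav, haW⟩, mem_erase.2 ⟨hbv, hbW⟩⟩, hac, hbc⟩

lemma DicolStep.exists_lift (hS : HitsCyclesThrough (relOn A W) v S) (hvS : v ∉ S)
    (hk : S.card + 2 ≤ k) {γ γ' : V → Fin k} (h : DicolStep (relOn A (W.erase v)) γ γ')
    {x : Fin k} (hx : x ∉ S.image γ) :
    ∃ x' ∉ S.image γ',
      ReflTransGen (DicolStep (relOn A W)) (update γ v x) (update γ' v x') := by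
  obtain ⟨u, c, rfl⟩ := h.exists_eq_update
  obtain ⟨x', hx'⟩ := Fin.exists_notMem_of_card_lt (T := insert c (S.image γ))
    ((card_insert_le _ _).trans_lt (by have := card_image_le (s := S) (f := γ); omega))
  have hx'γ : x' ∉ S.image γ := fun h => hx' (mem_insert_of_mem h)
  have hx'γ' : x' ∉ S.image (update γ u c) :=
    fun h => hx' (image_update_subset_insert S γ u c h)
  have lift {γ : V → Fin k} {x : Fin k} :=
    isDicolouring_update_of_notMem_image hS hvS (γ := γ) (x := x)
  refine ⟨x', hx'γ', ?_⟩
  have hmove_v : ReflTransGen (DicolStep (relOn A W)) (update γ v x) (update γ v x') := by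
    have := reflTransGen_dicolStep_update (a := v) (c := x') (lift h.1 hx)
      (by rw [update_idem]; exact lift h.1 hx'γ)
    rwa [update_idem] at this
  refine hmove_v.trans ?_
  by_cases huv : u = v
  · rw [huv, update_idem]
  · rw [update_comm huv]
    exact reflTransGen_dicolStep_update (lift h.1 hx'γ)
      (by rw [← update_comm huv]; exact lift h.2.1 hx'γ')

lemma Relation.ReflTransGen.exists_lift (hS : HitsCyclesThrough (relOn A W) v S)
    (hvS : v ∉ S) (hk : S.card + 2 ≤ k) {γ γ' : V → Fin k}
    (h : ReflTransGen (DicolStep (relOn A (W.erase v))) γ γ') {x : Fin k}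
    (hx : x ∉ S.image γ) :
    ∃ x' ∉ S.image γ',
      ReflTransGen (DicolStep (relOn A W)) (update γ v x) (update γ' v x') := by
  induction h with
  | refl => exact ⟨x, hx, .refl⟩
  | tail _ hstep ih =>
    obtain ⟨x₁, hx₁, hpath₁⟩ := ih
    obtain ⟨x₂, hx₂, hpath₂⟩ := hstep.exists_lift hS hvS hk hx₁
    exact ⟨x₂, hx₂, hpath₁.trans hpath₂⟩

end Lifting

theorem reflTransGen_dicolStep_relOn [Fintype V] [DecidableEq V] {A : V → V → Prop} {k : ℕ}
    (hk : cycleDegeneracy A + 2 ≤ k) (W : Finset V) {α β : V → Fin k}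
    (hα : IsDicolouring (relOn A W) α) (hβ : IsDicolouring (relOn A W) β) :
    ReflTransGen (DicolStep (relOn A W)) α β := by
  induction W using Finset.strongInduction generalizing α β with
  | H W ih =>
  rcases W.eq_empty_or_nonempty with rfl | hW
  · exact reflTransGen_dicolStep_of_forall_isDicolouring (isDicolouring_relOn_empty A) α β
  obtain ⟨v, hvW, hv⟩ := exists_cycleDegree_relOn_le_cycleDegeneracy A hW
  obtain ⟨S, hS_card, hvS, hS⟩ :=
    exists_hitsCyclesThrough_card_eq_cycleDegree (hα.not_rel_self v)
  have hSk : S.card + 2 ≤ k := by omega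
  have hα' := hα.anti fun _ _ => relOn_mono (erase_subset v W)
  have hβ' := hβ.anti fun _ _ => relOn_mono (erase_subset v W)
  have lift {γ : V → Fin k} {x : Fin k} :=
    isDicolouring_update_of_notMem_image hS hvS (γ := γ) (x := x)
  obtain ⟨x₀, hx₀⟩ := Fin.exists_notMem_of_card_lt (T := S.image α)
    (card_image_le.trans_lt (by omega))
  obtain ⟨x₁, hx₁, hpath⟩ :=
    (ih _ (erase_ssubset hvW) hα' hβ').exists_lift hS hvS hSk hx₀
  have hstart := reflTransGen_dicolStep_update hα (lift hα' hx₀)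
  have hend := reflTransGen_dicolStep_update (a := v) (c := β v) (lift hβ' hx₁) (by simpa)
  simp only [update_idem, update_eq_self] at hend
  exact hstart.trans (hpath.trans hend)

theorem stmt6 [Fintype V] [DecidableEq V] (A : V → V → Prop) (k : ℕ)
    (hk : cycleDegeneracy A + 2 ≤ k) (α β : V → Fin k)
    (hα : IsDicolouring A α) (hβ : IsDicolouring A β) :
    Relation.ReflTransGen (DicolStep A) α β := by
  rw [← relOn_univ A] at hα hβ ⊢
  exact reflTransGen_dicolStep_relOn hk univ hα hβ
end

section
/- Let G be a family of undirected graphs closed under edge-deletion with χ(G) ≤ k for every G ∈ G, and suppose that for every n-vertex G ∈ G the diameter of the k-colouring graph C_k(G) is at most f(n). Then for every n-vertex digraph D with UG(D) ∈ G, the diameter of the k-dicolouring graph D_k(D) is at most 2f(n). -/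
variable {V : Type*}

/-- The underlying undirected graph of the digraph `A`. -/
def UG (A : V → V → Prop) : SimpleGraph V where
  Adj x y := x ≠ y ∧ (A x y ∨ A y x)
  symm := ⟨fun x y h => ⟨Ne.symm h.1, h.2.elim Or.inr Or.inl⟩⟩
  loopless := ⟨fun x h => h.1 rfl⟩

/-- A proper colouring of a simple graph. -/
def ProperCol {C : Type*} (G : SimpleGraph V) (φ : V → C) : Prop :=
  ∀ x y, G.Adj x y → φ x ≠ φ y

/-- One step in the `k`-colouring graph of `G`. -/
def RecolStep (G : SimpleGraph V) {k : ℕ} (α β : V → Fin k) : Prop :=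
  ProperCol G α ∧ ProperCol G β ∧ ∃! v, α v ≠ β v

/-- `l` is a recolouring sequence from `α` to `β` in `G`. -/
def RecolPath (G : SimpleGraph V) {k : ℕ} (α β : V → Fin k)
    (l : List (V → Fin k)) : Prop :=
  List.Chain (RecolStep G) α l ∧ (α :: l).getLast (List.cons_ne_nil _ _) = β

/-!
For a dicolouring `φ` of `D`, delete from `UG(D)` every edge whose ends get the same `φ`-colour.
Any proper colouring `δ` of the resulting graph `G_φ` is a dicolouring of `D`: a `δ`-monochromatic
arc is an arc of the `φ`-monochromatic subdigraph, so a `δ`-monochromatic dicycle would be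
`φ`-monochromatic. The graphs `G_α, G_β ≤ UG(D)` lie in the family, and a proper `k`-colouring `γ` of
`UG(D)` is proper on both. Recolour `α` to `γ` inside `C_k(G_α)` and `β` to `γ` inside `C_k(G_β)`,
each in at most `f(n)` steps; every intermediate colouring is a dicolouring of `D`, so following the
first sequence and then the reverse of the second joins `α` to `β` in `D_k(D)`.
-/

section ChainFromTo

variable {X : Type*} {R S : X → X → Prop} {a b c : X} {l l₁ l₂ : List X}

/-- `RecolPath G` and `RedicolPath A` unfold to this, for the relations `RecolStep G` and
`DicolStep A`. -/
def IsChainFromTo (R : X → X → Prop) (a b : X) (l : List X) : Prop :=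
  (a :: l).IsChain R ∧ (a :: l).getLast (List.cons_ne_nil _ _) = b

theorem IsChainFromTo.imp (H : ∀ x y, R x y → S x y) (h : IsChainFromTo R a b l) :
    IsChainFromTo S a b l :=
  ⟨h.1.imp fun x y => H x y, h.2⟩

theorem IsChainFromTo.append (h₁ : IsChainFromTo R a b l₁) (h₂ : IsChainFromTo R b c l₂) :
    IsChainFromTo R a c (l₁ ++ l₂) := by
  obtain ⟨hc₁, rfl⟩ := h₁
  obtain ⟨hc₂, rfl⟩ := h₂
  constructor
  · rw [← List.cons_append]
    refine hc₁.append (List.isChain_cons.1 hc₂).2 ?_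
    intro x hx y hy
    rw [List.getLast?_eq_some_getLast (List.cons_ne_nil _ _), Option.mem_some_iff] at hx
    exact hx ▸ hc₂.rel_head? hy
  · rcases l₂.eq_nil_or_concat with rfl | ⟨t, z, rfl⟩
    · simp
    · simp [← List.append_assoc]

theorem IsChainFromTo.reverse (hR : ∀ x y, R x y → R y x) (h : IsChainFromTo R a b l) :
    IsChainFromTo R b a (a :: l).reverse.tail := by
  obtain ⟨hc, rfl⟩ := h
  have hrev : (a :: l).reverse = (a :: l).getLast (List.cons_ne_nil _ _) ::
      (a :: l).reverse.tail := by
    rw [← List.head_reverse (by simp), List.cons_head_tail]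
  refine ⟨hrev ▸ List.isChain_reverse.2 (hc.imp fun x y => hR x y), ?_⟩
  simp only [← hrev, List.getLast_reverse, List.head_cons]

end ChainFromTo

section Dicolouring

variable {C : Type*} {A R S : V → V → Prop} {φ δ : V → C}

theorem IsDicycle.imp_of_mem {l : List V} (H : ∀ x ∈ l, ∀ y ∈ l, R x y → S x y)
    (h : IsDicycle R l) : IsDicycle S l := by
  obtain ⟨hne, hnd, hc, hlast⟩ := h
  refine ⟨hne, hnd, hc.imp_of_mem_imp fun x y hx hy => H x hx y hy, ?_⟩
  intro x hx y hy
  exact H x (List.mem_of_getLast? hx) y (List.mem_of_mem_head? hy) (hlast x hx y hy)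

theorem Acyclic.mono (H : ∀ x y, R x y → S x y) (hS : Acyclic S) : Acyclic R :=
  fun ⟨l, hl⟩ => hS ⟨l, hl.imp_of_mem fun x _ y _ => H x y⟩

theorem IsDicolouring.irrefl (hφ : IsDicolouring A φ) (x : V) : ¬ A x x := fun hx =>
  hφ (φ x) ⟨[x], List.cons_ne_nil _ _, List.nodup_singleton x, List.isChain_singleton x,
    by simp [hx]⟩

/-- A dicycle all of whose arcs join equally coloured vertices lies in a single colour class. -/
theorem IsDicolouring.acyclic_sameColour (hφ : IsDicolouring A φ) :
    Acyclic fun x y => A x y ∧ φ x = φ y := by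
  rintro ⟨l, hl⟩
  obtain ⟨a, t, rfl⟩ := List.exists_cons_of_ne_nil hl.1
  have hconst : ∀ x ∈ a :: t, φ x = φ a :=
    hl.2.2.1.induction (φ · = φ a) _ (fun x y hxy hx => hxy.2 ▸ hx) fun _ => rfl
  exact hφ (φ a) ⟨a :: t, hl.imp_of_mem fun x hx y hy hxy => ⟨hxy.1, hconst x hx, hconst y hy⟩⟩

def bichromaticSubgraph (G : SimpleGraph V) (φ : V → C) : SimpleGraph V where
  Adj x y := G.Adj x y ∧ φ x ≠ φ y
  symm := ⟨fun _ _ h => ⟨h.1.symm, Ne.symm h.2⟩⟩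
  loopless := ⟨fun x h => G.loopless.irrefl x h.1⟩

theorem bichromaticSubgraph_le (G : SimpleGraph V) (φ : V → C) : bichromaticSubgraph G φ ≤ G :=
  fun _ _ h => And.left h

theorem properCol_bichromaticSubgraph (G : SimpleGraph V) (φ : V → C) :
    ProperCol (bichromaticSubgraph G φ) φ :=
  fun _ _ h => And.right h

theorem ProperCol.of_le {G H : SimpleGraph V} (hHG : H ≤ G) (hφ : ProperCol G φ) :
    ProperCol H φ :=
  fun x y h => hφ x y (hHG h)

theorem IsDicolouring.of_properCol_bichromaticSubgraph (hφ : IsDicolouring A φ)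
    (hδ : ProperCol (bichromaticSubgraph (UG A) φ) δ) : IsDicolouring A δ := by
  intro c
  refine hφ.acyclic_sameColour.mono ?_
  rintro x y ⟨hxy, hx, hy⟩
  refine ⟨hxy, not_not.1 fun hne => hδ x y (And.intro ⟨?_, Or.inl hxy⟩ hne) (hx.trans hy.symm)⟩
  rintro rfl
  exact hφ.irrefl x hxy

theorem DicolStep.symm {k : ℕ} (a b : V → Fin k) : DicolStep A a b → DicolStep A b a := by
  rintro ⟨ha, hb, v, hv, huniq⟩
  exact ⟨hb, ha, v, Ne.symm hv, fun u hu => huniq u (Ne.symm hu)⟩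

theorem RecolPath.toRedicolPath {k : ℕ} {φ α β : V → Fin k} {l : List (V → Fin k)}
    (hφ : IsDicolouring A φ) (h : RecolPath (bichromaticSubgraph (UG A) φ) α β l) :
    RedicolPath A α β l :=
  IsChainFromTo.imp (R := RecolStep _) (fun _ _ ⟨ha, hb, hv⟩ =>
    ⟨hφ.of_properCol_bichromaticSubgraph ha, hφ.of_properCol_bichromaticSubgraph hb, hv⟩) h

end Dicolouring

theorem stmt12_general [Fintype V] (𝒢 : Set (SimpleGraph V)) (k : ℕ)
    (f : ℕ → ℕ)
    (hclosed : ∀ G ∈ 𝒢, ∀ H : SimpleGraph V, H ≤ G → H ∈ 𝒢)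
    (hchi : ∀ G ∈ 𝒢, ∃ φ : V → Fin k, ProperCol G φ)
    (hdiam : ∀ G ∈ 𝒢, ∀ α β : V → Fin k, ProperCol G α → ProperCol G β →
      ∃ l : List (V → Fin k), RecolPath G α β l ∧ l.length ≤ f (Fintype.card V))
    (A : V → V → Prop) (hA : UG A ∈ 𝒢)
    (α β : V → Fin k) (hα : IsDicolouring A α) (hβ : IsDicolouring A β) :
    ∃ l : List (V → Fin k), RedicolPath A α β l ∧
      l.length ≤ 2 * f (Fintype.card V) := by
  obtain ⟨γ, hγ⟩ := hchi _ hA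
  have toγ : ∀ φ, IsDicolouring A φ →
      ∃ l, RedicolPath A φ γ l ∧ l.length ≤ f (Fintype.card V) := by
    intro φ hφ
    have hle := bichromaticSubgraph_le (UG A) φ
    obtain ⟨l, hl, hlen⟩ := hdiam _ (hclosed _ hA _ hle) φ γ
      (properCol_bichromaticSubgraph _ φ) (hγ.of_le hle)
    exact ⟨l, hl.toRedicolPath hφ, hlen⟩
  obtain ⟨l₁, h₁, hlen₁⟩ := toγ α hα
  obtain ⟨l₂, h₂, hlen₂⟩ := toγ β hβ
  refine ⟨_, IsChainFromTo.append h₁ (IsChainFromTo.reverse DicolStep.symm h₂), ?_⟩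
  simp only [List.length_append, List.length_tail, List.length_reverse, List.length_cons]
  omega

theorem stmt12 [Fintype V] [DecidableEq V] (𝒢 : Set (SimpleGraph V)) (k : ℕ)
    (f : ℕ → ℕ)
    (hclosed : ∀ G ∈ 𝒢, ∀ H : SimpleGraph V, H ≤ G → H ∈ 𝒢)
    (hchi : ∀ G ∈ 𝒢, ∃ φ : V → Fin k, ProperCol G φ)
    (hdiam : ∀ G ∈ 𝒢, ∀ α β : V → Fin k, ProperCol G α → ProperCol G β →
      ∃ l : List (V → Fin k), RecolPath G α β l ∧ l.length ≤ f (Fintype.card V))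
    (A : V → V → Prop) (hA : UG A ∈ 𝒢)
    (α β : V → Fin k) (hα : IsDicolouring A α) (hβ : IsDicolouring A β) :
    ∃ l : List (V → Fin k), RedicolPath A α β l ∧
      l.length ≤ 2 * f (Fintype.card V) :=
  stmt12_general 𝒢 k f hclosed hchi hdiam A hA α β hα hβ
end

section
/- Every digraph D admits a valid 𝒟-decomposition of width dw(D), i.e., an optimal 𝒟-decomposition (T, X) such that |X_t \ X_{t'}| = |X_{t'} \ X_t| = 1 for every edge tt' of T. -/
variable {V : Type*}

/-- `D[S]` is strongly connected. -/
def StronglyConnectedOn (A : V → V → Prop) (S : Finset V) : Prop :=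
  ∀ x ∈ S, ∀ y ∈ S, Relation.ReflTransGen (fun a b => A a b ∧ a ∈ S ∧ b ∈ S) x y

/-- Adjacency in the support of `S` in the decomposition `(T, X)`. -/
def SupportAdj {n : ℕ} (T : SimpleGraph (Fin n)) (X : Fin n → Finset V)
    (S : Finset V) (t t' : Fin n) : Prop :=
  T.Adj t t' ∧ ∃ u ∈ S, u ∈ X t ∧ u ∈ X t'

/-- A 𝒟-decomposition of the digraph `A`: a tree `T` with bags `X` such that
for every `S` inducing a strongly connected subdigraph, the support of `S` is
a non-empty connected subgraph of `T`. -/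
def IsDDecomp (A : V → V → Prop) {n : ℕ} (T : SimpleGraph (Fin n))
    (X : Fin n → Finset V) : Prop :=
  T.IsTree ∧ ∀ S : Finset V, S.Nonempty → StronglyConnectedOn A S →
    (∃ t, ∃ u ∈ S, u ∈ X t) ∧
    ∀ t t', (∃ u ∈ S, u ∈ X t) → (∃ u ∈ S, u ∈ X t') →
      Relation.ReflTransGen (SupportAdj T X S) t t'

/-- The width of a 𝒟-decomposition: maximum bag size minus one. -/
def ddWidth {n : ℕ} (X : Fin n → Finset V) : ℕ :=
  (Finset.univ.sup fun t => (X t).card) - 1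

/-- The 𝒟-width of the digraph `A`. -/
noncomputable def dWidth (A : V → V → Prop) : ℕ :=
  sInf { w | ∃ (n : ℕ) (T : SimpleGraph (Fin n)) (X : Fin n → Finset V),
    IsDDecomp A T X ∧ ddWidth X = w }

/-!
Start from a 𝒟-decomposition of optimal width and let `s` be its largest bag size. Adding to a
bag a vertex of a neighbouring bag keeps the bags containing any given vertex connected, so all
bags can be filled up to size `s`. Root the tree and let `d t = |X t \ X (parent t)|`. If
`d t = 0`, the two bags are equal and the edge can be contracted. If `d t ≥ 2`, exchanging a
vertex of `X t \ X (parent t)` for one of `X (parent t) \ X t` yields a bag lying between the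
intersection and the union of the two, which can be placed on a subdivision of the edge,
splitting `d t` into `1` and `d t - 1`. Both operations decrease `2 * ∑ (d t - 1) + #nodes`, so
they end in a valid decomposition whose bags all have size `s`.
-/

open Finset Relation SimpleGraph

section Decomposition

variable {ι κ : Type*} {A : V → V → Prop}

def SupportAdj' (T : SimpleGraph ι) (X : ι → Finset V) (S : Finset V) (t t' : ι) : Prop :=
  T.Adj t t' ∧ ∃ u ∈ S, u ∈ X t ∧ u ∈ X t'

def IsDDecomp' (A : V → V → Prop) (T : SimpleGraph ι) (X : ι → Finset V) : Prop :=
  T.IsTree ∧ ∀ S : Finset V, S.Nonempty → StronglyConnectedOn A S →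
    (∃ t, ∃ u ∈ S, u ∈ X t) ∧
    ∀ t t', (∃ u ∈ S, u ∈ X t) → (∃ u ∈ S, u ∈ X t') →
      ReflTransGen (SupportAdj' T X S) t t'

theorem isDDecomp_iff_isDDecomp' {n : ℕ} {T : SimpleGraph (Fin n)} {X : Fin n → Finset V} :
    IsDDecomp A T X ↔ IsDDecomp' A T X :=
  Iff.rfl

def AdjContaining (T : SimpleGraph ι) (X : ι → Finset V) (u : V) (t t' : ι) : Prop :=
  T.Adj t t' ∧ u ∈ X t ∧ u ∈ X t'

variable {T : SimpleGraph ι} {X : ι → Finset V} {T' : SimpleGraph κ} {X' : κ → Finset V}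

instance (S : Finset V) : Std.Symm (SupportAdj' T X S) :=
  ⟨fun _ _ ⟨hadj, u, hu, ht, ht'⟩ => ⟨hadj.symm, u, hu, ht', ht⟩⟩

instance (u : V) : Std.Symm (AdjContaining T X u) :=
  ⟨fun _ _ ⟨hadj, ht, ht'⟩ => ⟨hadj.symm, ht', ht⟩⟩

theorem AdjContaining.supportAdj' {u : V} {S : Finset V} (hu : u ∈ S) {t t' : ι}
    (h : AdjContaining T X u t t') : SupportAdj' T X S t t' :=
  ⟨h.1, u, hu, h.2⟩

/-- To transfer a decomposition along `f`, it suffices that for every vertex `u`, the bags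
containing `u` on both sides are linked through `f` by paths of bags containing `u`. -/
theorem IsDDecomp'.of_map (h : IsDDecomp' A T X) (hT' : T'.IsTree) (f : ι → κ)
    (hsub : ∀ t, X t ⊆ X' (f t))
    (hstep : ∀ u t t', AdjContaining T X u t t' →
      ReflTransGen (AdjContaining T' X' u) (f t) (f t'))
    (hback : ∀ u s, u ∈ X' s → ∃ t, u ∈ X t ∧ ReflTransGen (AdjContaining T' X' u) s (f t)) :
    IsDDecomp' A T' X' := by
  refine ⟨hT', fun S hS hSC => ?_⟩
  obtain ⟨⟨t, u, hu, hut⟩, hconn⟩ := h.2 S hS hSC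
  refine ⟨⟨f t, u, hu, hsub t hut⟩, ?_⟩
  have lift {u : V} (hu : u ∈ S) {s s' : κ} (h : ReflTransGen (AdjContaining T' X' u) s s') :
      ReflTransGen (SupportAdj' T' X' S) s s' :=
    ReflTransGen.mono (fun _ _ => AdjContaining.supportAdj' hu) _ _ h
  have back (s : κ) : (∃ u ∈ S, u ∈ X' s) →
      ∃ t, (∃ u ∈ S, u ∈ X t) ∧ ReflTransGen (SupportAdj' T' X' S) s (f t) := by
    rintro ⟨u, hu, hus⟩
    obtain ⟨t, hut, hpath⟩ := hback u s hus
    exact ⟨t, ⟨u, hu, hut⟩, lift hu hpath⟩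
  intro s s' hs hs'
  obtain ⟨t, ht, hst⟩ := back s hs
  obtain ⟨t', ht', hst'⟩ := back s' hs'
  have hmid : ReflTransGen (SupportAdj' T' X' S) (f t) (f t') :=
    (hconn t t' ht ht').lift' f fun a b ⟨hadj, u, hu, ha, hb⟩ =>
      lift hu (hstep u a b ⟨hadj, ha, hb⟩)
  exact hst.trans (hmid.trans (symm hst'))

theorem IsDDecomp'.map_iso (h : IsDDecomp' A T X) (φ : T ≃g T') :
    IsDDecomp' A T' (X ∘ φ.symm) :=
  h.of_map (φ.isTree_iff.mp h.1) φ (fun t => by simp)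
    (fun _ _ _ ⟨hadj, ht, ht'⟩ => .single ⟨φ.map_adj_iff.mpr hadj, by simpa, by simpa⟩)
    (fun _ s hu => ⟨φ.symm s, hu, by rw [φ.apply_symm_apply]⟩)

variable [DecidableEq V]

def IsValidDecomp (T : SimpleGraph ι) (X : ι → Finset V) : Prop :=
  ∀ t t', T.Adj t t' → (X t \ X t').card = 1 ∧ (X t' \ X t).card = 1

theorem IsValidDecomp.map_iso (h : IsValidDecomp T X) (φ : T ≃g T') :
    IsValidDecomp T' (X ∘ φ.symm) :=
  fun _ _ hadj => h _ _ (φ.symm.map_adj_iff.mpr hadj)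

end Decomposition

section Padding

variable {ι : Type*} {A : V → V → Prop} {T : SimpleGraph ι} {X : ι → Finset V}
  [DecidableEq V]

theorem IsDDecomp'.update_insert [DecidableEq ι] (h : IsDDecomp' A T X) {t₀ t₁ : ι}
    (hadj : T.Adj t₀ t₁) {u₀ : V} (hu₀ : u₀ ∈ X t₁) :
    IsDDecomp' A T (Function.update X t₀ (insert u₀ (X t₀))) := by
  have hsub (t : ι) : X t ⊆ Function.update X t₀ (insert u₀ (X t₀)) t := by
    rcases eq_or_ne t t₀ with rfl | ht
    · simp [subset_insert]
    · simp [ht]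
  refine h.of_map h.1 id hsub
    (fun _ t t' ⟨hadj', ht, ht'⟩ => .single ⟨hadj', hsub t ht, hsub t' ht'⟩)
    (fun u s hu => ?_)
  rcases eq_or_ne s t₀ with rfl | hs
  · rw [Function.update_self, mem_insert] at hu
    rcases hu with rfl | hu
    · exact ⟨t₁, hu₀, .single ⟨hadj, by simp, by simp [hadj.ne.symm, hu₀]⟩⟩
    · exact ⟨s, hu, .refl⟩
  · exact ⟨s, by simpa [hs] using hu, .refl⟩

theorem SimpleGraph.Walk.exists_adj_card_lt_not_subset {s : ℕ} {t m : ι} (w : T.Walk t m)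
    (ht : (X t).card < s) (hm : s ≤ (X m).card) :
    ∃ a b, T.Adj a b ∧ (X a).card < s ∧ ¬X b ⊆ X a := by
  induction w with
  | nil => omega
  | @cons t v m hadj w ih =>
    by_cases hsub : X v ⊆ X t
    · exact ih ((card_le_card hsub).trans_lt ht) hm
    · exact ⟨t, v, hadj, ht, hsub⟩

theorem IsDDecomp'.exists_card_eq [Fintype ι] (h : IsDDecomp' A T X) {s : ℕ} {m : ι}
    (hle : ∀ t, (X t).card ≤ s) (hm : (X m).card = s) :
    ∃ Y : ι → Finset V, IsDDecomp' A T Y ∧ ∀ t, (Y t).card = s := by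
  classical
  induction hd : ∑ t, (s - (X t).card) using Nat.strong_induction_on generalizing X with
  | _ d ih =>
  by_cases hall : ∀ t, (X t).card = s
  · exact ⟨X, h, hall⟩
  push Not at hall
  obtain ⟨t, ht⟩ := hall
  obtain ⟨w⟩ := h.1.connected.preconnected t m
  obtain ⟨a, b, hadj, ha, hab⟩ := w.exists_adj_card_lt_not_subset ((hle t).lt_of_ne ht) hm.ge
  obtain ⟨u, hub, hua⟩ := not_subset.mp hab
  set Y := Function.update X a (insert u (X a))
  have hYa : (Y a).card = (X a).card + 1 := by simp [Y, card_insert_of_notMem hua]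
  have hYt (t : ι) (ht : t ≠ a) : Y t = X t := Function.update_of_ne ht _ _
  have hma : m ≠ a := by rintro rfl; omega
  refine ih _ ?_ (X := Y) (h.update_insert hadj hub) (fun t => ?_) (by rw [hYt m hma, hm]) rfl
  · rw [← hd]
    refine sum_lt_sum (fun t _ => ?_) ⟨a, mem_univ a, by omega⟩
    rcases eq_or_ne t a with rfl | ht
    · omega
    · rw [hYt t ht]
  · rcases eq_or_ne t a with rfl | ht
    · omega
    · rw [hYt t ht]; exact hle t

end Padding

/-- A rooted tree given by its parent map; `rank` certifies that iterating `parent` reaches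
`root`. -/
structure ParentTree (ι : Type*) where
  root : ι
  parent : ι → ι
  rank : ι → ℕ
  parent_root : parent root = root
  rank_parent_lt : ∀ t, t ≠ root → rank (parent t) < rank t

namespace ParentTree

variable {ι : Type*} {P : ParentTree ι} {t₀ t t' : ι}

def graph (P : ParentTree ι) : SimpleGraph ι :=
  SimpleGraph.fromRel fun t t' => P.parent t = t'

theorem graph_adj : P.graph.Adj t t' ↔ t ≠ t' ∧ (P.parent t = t' ∨ P.parent t' = t) :=
  fromRel_adj _ _ _

theorem parent_ne (ht : t ≠ P.root) : P.parent t ≠ t :=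
  fun h => (P.rank_parent_lt t ht).ne (congrArg P.rank h)

theorem ne_root_of_parent_ne (h : P.parent t ≠ t) : t ≠ P.root :=
  fun ht => h (ht ▸ P.parent_root)

theorem adj_parent (ht : t ≠ P.root) : P.graph.Adj t (P.parent t) :=
  graph_adj.mpr ⟨(parent_ne ht).symm, .inl rfl⟩

theorem reachable_root (t : ι) : P.graph.Reachable t P.root := by
  induction hr : P.rank t using Nat.strong_induction_on generalizing t with
  | _ r ih =>
  rcases eq_or_ne t P.root with rfl | ht
  · rfl
  · exact (adj_parent ht).reachable.trans (ih _ (hr ▸ P.rank_parent_lt t ht) _ rfl)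

theorem connected (P : ParentTree ι) : P.graph.Connected :=
  haveI : Nonempty ι := ⟨P.root⟩
  ⟨fun s t => (reachable_root s).trans (reachable_root t).symm⟩

/-- Every edge is `s(t, parent t)` for exactly one non-root `t`. -/
theorem card_edgeSet_add_one [Finite ι] (P : ParentTree ι) :
    Nat.card P.graph.edgeSet + 1 = Nat.card ι := by
  let e : {t // t ≠ P.root} → P.graph.edgeSet := fun t => ⟨s(t.1, P.parent t.1), adj_parent t.2⟩
  have he : Function.Bijective e := by
    constructor
    · rintro ⟨a, ha⟩ ⟨b, hb⟩ hab
      rcases Sym2.eq_iff.mp (congrArg Subtype.val hab) with ⟨hab, -⟩ | ⟨hab, hba⟩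
      · exact Subtype.ext hab
      · have h₁ := P.rank_parent_lt a ha
        have h₂ := P.rank_parent_lt b hb
        rw [hba] at h₁
        rw [← hab] at h₂
        exact absurd (h₁.trans h₂) (lt_irrefl _)
    · rintro ⟨e, he⟩
      induction e using Sym2.ind with | _ a b => ?_
      rcases graph_adj.mp he with ⟨hne, h | h⟩
      · exact ⟨⟨a, ne_root_of_parent_ne (h ▸ hne.symm)⟩, by simp [e, h]⟩
      · exact ⟨⟨b, ne_root_of_parent_ne (h ▸ hne)⟩, by simp [e, h, Sym2.eq_swap]⟩
  rw [← Nat.card_congr (Equiv.ofBijective e he)]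
  have := Fintype.ofFinite ι
  classical
  simp only [Nat.card_eq_fintype_card, Fintype.card_subtype_compl, Fintype.card_unique]
  have := Fintype.card_pos_iff.mpr ⟨P.root⟩
  omega

theorem isTree [Finite ι] (P : ParentTree ι) : P.graph.IsTree :=
  isTree_iff_connected_and_card.mpr ⟨P.connected, P.card_edgeSet_add_one⟩

/-- Every tree is rooted: take as parent the next vertex on a shortest path to the root. -/
theorem exists_graph_eq {T : SimpleGraph ι} (hT : T.IsTree) : ∃ P : ParentTree ι, P.graph = T := by
  classical
  obtain ⟨r⟩ := hT.connected.nonempty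
  have step (t : ι) (ht : t ≠ r) : ∃ t', T.Adj t t' ∧ T.dist t' r < T.dist t r := by
    obtain ⟨w, hw⟩ := hT.connected.exists_walk_length_eq_dist t r
    have hnil : ¬w.Nil := Walk.not_nil_of_ne ht
    have := dist_le w.tail
    have := w.length_tail_add_one hnil
    exact ⟨w.snd, w.adj_snd hnil, by omega⟩
  choose! p hpadj hpdist using step
  let P : ParentTree ι :=
    { root := r
      parent := fun t => if t = r then r else p t
      rank := fun t => T.dist t r
      parent_root := if_pos rfl
      rank_parent_lt := fun t ht => by simpa [ht] using hpdist t ht }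
  have hle : P.graph ≤ T := by
    have key (a : ι) (ha : P.parent a ≠ a) : T.Adj a (P.parent a) := by
      have har : a ≠ r := ne_root_of_parent_ne ha
      simpa [P, har] using hpadj a har
    intro a b hab
    rcases graph_adj.mp hab with ⟨hne, rfl | rfl⟩
    · exact key a hne.symm
    · exact (key b hne).symm
  exact ⟨P, (isTree_iff_minimal_connected.mp hT).eq_of_le P.connected hle⟩

open Classical in
/-- The quotient map of contracting the edge from `t₀` to its parent. -/
noncomputable def collapse (P : ParentTree ι) (h₀ : t₀ ≠ P.root) (t : ι) : {t // t ≠ t₀} :=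
  if ht : t = t₀ then ⟨P.parent t₀, parent_ne h₀⟩ else ⟨t, ht⟩

theorem collapse_of_ne (h₀ : t₀ ≠ P.root) (ht : t ≠ t₀) : P.collapse h₀ t = ⟨t, ht⟩ :=
  dif_neg ht

theorem collapse_self (h₀ : t₀ ≠ P.root) : P.collapse h₀ t₀ = ⟨P.parent t₀, parent_ne h₀⟩ :=
  dif_pos rfl

theorem collapse_coe (h₀ : t₀ ≠ P.root) (t : {t // t ≠ t₀}) : P.collapse h₀ t = t :=
  collapse_of_ne h₀ t.2

theorem collapse_parent_self (h₀ : t₀ ≠ P.root) :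
    P.collapse h₀ (P.parent t₀) = P.collapse h₀ t₀ := by
  rw [collapse_self, collapse_of_ne]

theorem rank_collapse_le (h₀ : t₀ ≠ P.root) (t : ι) : P.rank (P.collapse h₀ t) ≤ P.rank t := by
  rcases eq_or_ne t t₀ with rfl | ht
  · rw [collapse_self]
    exact (P.rank_parent_lt t h₀).le
  · rw [collapse_of_ne h₀ ht]

noncomputable def contract (P : ParentTree ι) (h₀ : t₀ ≠ P.root) : ParentTree {t // t ≠ t₀} where
  root := ⟨P.root, h₀.symm⟩
  parent t := P.collapse h₀ (P.parent t)
  rank t := P.rank t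
  parent_root := by rw [P.parent_root]; exact collapse_of_ne h₀ h₀.symm
  rank_parent_lt t ht :=
    (rank_collapse_le h₀ _).trans_lt (P.rank_parent_lt t fun h => ht (Subtype.ext h))

theorem bag_collapse {X : ι → Finset V} (h₀ : t₀ ≠ P.root) (hX : X t₀ = X (P.parent t₀)) (t : ι) :
    X (P.collapse h₀ t) = X t := by
  rcases eq_or_ne t t₀ with rfl | ht
  · rw [collapse_self, hX]
  · rw [collapse_of_ne h₀ ht]

theorem contract_adj_collapse (h₀ : t₀ ≠ P.root) (hadj : P.graph.Adj t t')
    (hne : P.collapse h₀ t ≠ P.collapse h₀ t') :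
    (P.contract h₀).graph.Adj (P.collapse h₀ t) (P.collapse h₀ t') := by
  have key (a : ι) (hne : P.collapse h₀ a ≠ P.collapse h₀ (P.parent a)) :
      (P.contract h₀).graph.Adj (P.collapse h₀ a) (P.collapse h₀ (P.parent a)) := by
    have ha : a ≠ t₀ := by rintro rfl; exact hne (collapse_parent_self h₀).symm
    refine graph_adj.mpr ⟨hne, .inl ?_⟩
    rw [collapse_of_ne h₀ ha]
    rfl
  rcases (graph_adj.mp hadj).2 with rfl | rfl
  · exact key t hne
  · exact (key t' hne.symm).symm

open Classical in
/-- Subdivision of the edge from `t₀` to its parent by the new vertex `none`. -/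
noncomputable def subdivide (P : ParentTree ι) (h₀ : t₀ ≠ P.root) : ParentTree (Option ι) where
  root := some P.root
  parent
    | none => some (P.parent t₀)
    | some t => if t = t₀ then none else some (P.parent t)
  rank
    | none => 2 * P.rank t₀ - 1
    | some t => 2 * P.rank t
  parent_root := by simp [h₀.symm, P.parent_root]
  rank_parent_lt := by
    have := P.rank_parent_lt t₀ h₀
    rintro (_ | t) ht
    · dsimp only
      omega
    · have := P.rank_parent_lt t fun h => ht (congrArg some h)
      dsimp only
      split_ifs with h
      · subst h
        dsimp only
        omega
      · dsimp only
        omega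

theorem subdivide_adj_none_self (h₀ : t₀ ≠ P.root) : (P.subdivide h₀).graph.Adj none (some t₀) :=
  graph_adj.mpr ⟨(Option.some_ne_none _).symm, .inr (if_pos rfl)⟩

theorem subdivide_adj_none_parent (h₀ : t₀ ≠ P.root) :
    (P.subdivide h₀).graph.Adj none (some (P.parent t₀)) :=
  graph_adj.mpr ⟨(Option.some_ne_none _).symm, .inl rfl⟩

theorem subdivide_adj_some (h₀ : t₀ ≠ P.root) (hadj : P.graph.Adj t t')
    (he : s(t, t') ≠ s(t₀, P.parent t₀)) : (P.subdivide h₀).graph.Adj (some t) (some t') := by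
  have key (a : ι) (hne : a ≠ P.parent a) (he : s(a, P.parent a) ≠ s(t₀, P.parent t₀)) :
      (P.subdivide h₀).graph.Adj (some a) (some (P.parent a)) := by
    have ha : a ≠ t₀ := by rintro rfl; exact he rfl
    exact graph_adj.mpr ⟨Option.some_injective _ |>.ne hne, .inl (if_neg ha)⟩
  rcases graph_adj.mp hadj with ⟨hne, rfl | rfl⟩
  · exact key t hne he
  · exact (key t' hne.symm (Sym2.eq_swap ▸ he)).symm

end ParentTree

section Surgery

variable {ι : Type*} {A : V → V → Prop} {P : ParentTree ι} {X : ι → Finset V}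
  {t₀ : ι}

open ParentTree

theorem IsDDecomp'.contract [Finite ι] (h : IsDDecomp' A P.graph X) (h₀ : t₀ ≠ P.root)
    (hX : X t₀ = X (P.parent t₀)) : IsDDecomp' A (P.contract h₀).graph (fun t => X t) := by
  have hbag := bag_collapse h₀ hX
  refine h.of_map (P.contract h₀).isTree (P.collapse h₀) (fun t => (hbag t).ge)
    (fun u t t' ⟨hadj, ht, ht'⟩ => ?_) (fun u s hu => ⟨s, hu, by rw [collapse_coe]⟩)
  by_cases hne : P.collapse h₀ t = P.collapse h₀ t'
  · rw [hne]
  · exact .single ⟨contract_adj_collapse h₀ hadj hne, (hbag t).ge ht, (hbag t').ge ht'⟩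

theorem IsDDecomp'.subdivide [Finite ι] [DecidableEq V] (h : IsDDecomp' A P.graph X)
    (h₀ : t₀ ≠ P.root)
    {Y : Finset V} (hY : Y ⊆ X t₀ ∪ X (P.parent t₀)) (hY' : X t₀ ∩ X (P.parent t₀) ⊆ Y) :
    IsDDecomp' A (P.subdivide h₀).graph (fun o => o.elim Y X) := by
  have hpath {u : V} (h0 : u ∈ X t₀) (h1 : u ∈ X (P.parent t₀)) :
      ReflTransGen (AdjContaining (P.subdivide h₀).graph (fun o => o.elim Y X) u)
        (some t₀) (some (P.parent t₀)) :=
    have huY : u ∈ Y := hY' (mem_inter.mpr ⟨h0, h1⟩)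
    .head ⟨(subdivide_adj_none_self h₀).symm, h0, huY⟩
      (.single ⟨subdivide_adj_none_parent h₀, huY, h1⟩)
  refine h.of_map (P.subdivide h₀).isTree some (fun _ => subset_rfl)
    (fun u t t' ⟨hadj, ht, ht'⟩ => ?_) (fun u o hu => ?_)
  · by_cases he : s(t, t') = s(t₀, P.parent t₀)
    · rcases Sym2.eq_iff.mp he with ⟨rfl, rfl⟩ | ⟨rfl, rfl⟩
      · exact hpath ht ht'
      · exact symm (hpath ht' ht)
    · exact .single ⟨subdivide_adj_some h₀ hadj he, ht, ht'⟩
  · cases o with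
    | some t => exact ⟨t, hu, .refl⟩
    | none =>
      rcases mem_union.mp (hY hu) with h | h
      · exact ⟨t₀, h, .single ⟨subdivide_adj_none_self h₀, hu, h⟩⟩
      · exact ⟨P.parent t₀, h, .single ⟨subdivide_adj_none_parent h₀, hu, h⟩⟩

end Surgery

namespace Finset

variable {α : Type*} [DecidableEq α] {S R : Finset α} {a b : α}

theorem insert_erase_subset_union (hb : b ∈ R) : insert b (S.erase a) ⊆ S ∪ R := by
  intro u
  simp only [mem_insert, mem_erase, mem_union]
  grind

theorem inter_subset_insert_erase (ha : a ∉ R) : S ∩ R ⊆ insert b (S.erase a) := by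
  intro u
  simp only [mem_insert, mem_erase, mem_inter]
  grind

theorem card_insert_erase (ha : a ∈ S) (hb : b ∉ S) : (insert b (S.erase a)).card = S.card := by
  rw [card_insert_of_notMem (fun h => hb (mem_of_mem_erase h)), card_erase_add_one ha]

theorem insert_erase_sdiff (hb : b ∈ R) : insert b (S.erase a) \ R = (S \ R).erase a := by
  ext u
  simp only [mem_insert, mem_erase, mem_sdiff]
  grind

theorem sdiff_insert_erase (ha : a ∈ S) (hb : b ∉ S) : S \ insert b (S.erase a) = {a} := by
  ext u
  simp only [mem_insert, mem_erase, mem_sdiff, mem_singleton]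
  grind

end Finset

section Validity

variable {ι : Type*} {A : V → V → Prop} {P : ParentTree ι} {X : ι → Finset V} {t₀ : ι}
  {s : ℕ} [DecidableEq V]

open ParentTree

theorem ParentTree.isValidDecomp (hX : ∀ t, (X t).card = s)
    (hv : ∀ t, t ≠ P.root → (X t \ X (P.parent t)).card = 1) : IsValidDecomp P.graph X := by
  have key (t : ι) (ht : t ≠ P.parent t) :
      (X t \ X (P.parent t)).card = 1 ∧ (X (P.parent t) \ X t).card = 1 := by
    have h := hv t (ne_root_of_parent_ne ht.symm)
    exact ⟨h, card_sdiff_comm ((hX _).trans (hX _).symm) ▸ h⟩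
  intro t t' hadj
  rcases graph_adj.mp hadj with ⟨hne, rfl | rfl⟩
  · exact key t hne
  · exact (key t' hne.symm).symm

def ParentTree.excess [Fintype ι] (P : ParentTree ι) (X : ι → Finset V) : ℕ :=
  ∑ t, ((X t \ X (P.parent t)).card - 1)

theorem ParentTree.excess_contract [Fintype ι] [Fintype {t // t ≠ t₀}] (h₀ : t₀ ≠ P.root)
    (hX : X t₀ = X (P.parent t₀)) : (P.contract h₀).excess (fun t => X t) = P.excess X := by
  classical
  calc ∑ t : {t // t ≠ t₀}, ((X t \ X (P.collapse h₀ (P.parent t))).card - 1)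
      = ∑ t : {t // t ≠ t₀}, ((X t \ X (P.parent t)).card - 1) := by
        simp only [bag_collapse h₀ hX]
    _ = ∑ t ∈ univ.erase t₀, ((X t \ X (P.parent t)).card - 1) :=
        (sum_subtype (univ.erase t₀) (fun _ => by simp) fun t =>
      (X t \ X (P.parent t)).card - 1).symm
    _ = P.excess X := sum_erase _ (by simp [hX])

theorem ParentTree.excess_subdivide [Fintype ι] (h₀ : t₀ ≠ P.root) {a b : V}
    (ha : a ∈ X t₀ \ X (P.parent t₀)) (hb : b ∈ X (P.parent t₀) \ X t₀)
    (hq : 2 ≤ (X t₀ \ X (P.parent t₀)).card) :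
    (P.subdivide h₀).excess (fun o => o.elim (insert b ((X t₀).erase a)) X) + 1 = P.excess X := by
  classical
  set f : ι → ℕ := fun t => (X t \ X (P.parent t)).card - 1
  set g : Option ι → ℕ := fun o =>
    (o.elim (insert b ((X t₀).erase a)) X \
      ((P.subdivide h₀).parent o).elim (insert b ((X t₀).erase a)) X).card - 1
  have hsome : ∀ t ∈ univ.erase t₀, g (some t) = f t := by
    intro t ht
    simp [g, f, subdivide, ne_of_mem_erase ht]
  have hnone : g none = f t₀ - 1 := by
    simp [g, f, subdivide, insert_erase_sdiff (mem_sdiff.mp hb).1, card_erase_of_mem ha]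
  have hself : g (some t₀) = 0 := by
    simp [g, subdivide, sdiff_insert_erase (mem_sdiff.mp ha).1 (mem_sdiff.mp hb).2]
  have hf : 1 ≤ f t₀ := by simp only [f]; omega
  change ∑ o, g o + 1 = ∑ t, f t
  rw [Fintype.sum_option, ← add_sum_erase univ _ (mem_univ t₀), sum_congr rfl hsome,
    ← add_sum_erase univ f (mem_univ t₀), hnone, hself]
  eta_reduce
  omega

end Validity

theorem ParentTree.exists_isValidDecomp [DecidableEq V] {A : V → V → Prop} {s : ℕ} {ι : Type}
    [Fintype ι] {X : ι → Finset V} (P : ParentTree ι)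
    (h : IsDDecomp' A P.graph X) (hX : ∀ t, (X t).card = s) :
    ∃ (κ : Type) (_ : Fintype κ) (T : SimpleGraph κ) (Y : κ → Finset V),
      IsDDecomp' A T Y ∧ (∀ t, (Y t).card = s) ∧ IsValidDecomp T Y := by
  classical
  induction hm : 2 * P.excess X + Fintype.card ι using Nat.strong_induction_on
    generalizing ι with
  | _ m ih =>
  by_cases hv : ∀ t, t ≠ P.root → (X t \ X (P.parent t)).card = 1
  · exact ⟨ι, inferInstance, P.graph, X, h, hX, isValidDecomp hX hv⟩
  push Not at hv
  obtain ⟨t₀, h₀, hne⟩ := hv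
  have hcomm : (X (P.parent t₀) \ X t₀).card = (X t₀ \ X (P.parent t₀)).card :=
    card_sdiff_comm ((hX _).trans (hX _).symm)
  rcases Nat.lt_or_gt_of_ne hne with hq | hq
  · have hXeq : X t₀ = X (P.parent t₀) :=
      eq_of_subset_of_card_le (sdiff_eq_empty_iff_subset.mp (card_eq_zero.mp (by omega)))
        ((hX _).trans_le (hX _).ge)
    refine ih _ ?_ (P.contract h₀) (h.contract h₀ hXeq) (fun t => hX t) rfl
    rw [← hm, excess_contract h₀ hXeq]
    have := Fintype.card_subtype_lt (p := (· ≠ t₀)) (x := t₀) (by simp)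
    omega
  · obtain ⟨a, ha⟩ := card_pos.mp (by omega : 0 < (X t₀ \ X (P.parent t₀)).card)
    obtain ⟨b, hb⟩ := card_pos.mp (by omega : 0 < (X (P.parent t₀) \ X t₀).card)
    have hexc := excess_subdivide h₀ ha hb hq
    rw [mem_sdiff] at ha hb
    refine ih _ ?_ (P.subdivide h₀) (h.subdivide h₀ (insert_erase_subset_union hb.1)
      (inter_subset_insert_erase ha.2)) (fun o => ?_) rfl
    · rw [← hm, ← hexc, Fintype.card_option]
      omega
    · cases o with
      | none => exact (card_insert_erase ha.1 hb.2).trans (hX t₀)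
      | some t => exact hX t

theorem exists_isDDecomp_ddWidth_eq_dWidth [Fintype V] (A : V → V → Prop) :
    ∃ (n : ℕ) (T : SimpleGraph (Fin n)) (X : Fin n → Finset V),
      IsDDecomp A T X ∧ ddWidth X = dWidth A := by
  refine Nat.sInf_mem (s := {w | ∃ (n : ℕ) (T : SimpleGraph (Fin n)) (X : Fin n → Finset V),
    IsDDecomp A T X ∧ ddWidth X = w}) ⟨_, 1, ⊥, fun _ => univ,
      ⟨.of_subsingleton, fun _ ⟨u, hu⟩ _ => ?_⟩, rfl⟩
  exact ⟨⟨0, u, hu, mem_univ u⟩, fun t t' _ _ => by rw [Subsingleton.elim t t']⟩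

theorem ddWidth_eq_of_card_eq {n s : ℕ} [Nonempty (Fin n)] {X : Fin n → Finset V}
    (hX : ∀ t, (X t).card = s) : ddWidth X = s - 1 := by
  simp only [ddWidth, hX, sup_const univ_nonempty]

theorem stmt15 [Fintype V] [DecidableEq V] (A : V → V → Prop) :
    ∃ (n : ℕ) (T : SimpleGraph (Fin n)) (X : Fin n → Finset V),
      IsDDecomp A T X ∧ ddWidth X = dWidth A ∧
      ∀ t t', T.Adj t t' → (X t \ X t').card = 1 ∧ (X t' \ X t).card = 1 := by
  obtain ⟨n, T, X, hX, hw⟩ := exists_isDDecomp_ddWidth_eq_dWidth A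
  have : Nonempty (Fin n) := hX.1.connected.nonempty
  obtain ⟨m, -, hm⟩ := exists_mem_eq_sup univ univ_nonempty fun t => (X t).card
  obtain ⟨X₁, hX₁, hcard₁⟩ := (isDDecomp_iff_isDDecomp'.mp hX).exists_card_eq
    (fun t => le_sup (f := fun t => (X t).card) (mem_univ t)) hm.symm
  obtain ⟨P, rfl⟩ := ParentTree.exists_graph_eq hX.1
  obtain ⟨κ, _, T₂, X₂, hX₂, hcard₂, hvalid₂⟩ := P.exists_isValidDecomp hX₁ hcard₁
  let φ := Iso.map (Fintype.equivFin κ) T₂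
  have hdecomp := hX₂.map_iso φ
  have : Nonempty (Fin (Fintype.card κ)) := hdecomp.1.connected.nonempty
  exact ⟨_, _, X₂ ∘ φ.symm, hdecomp, (ddWidth_eq_of_card_eq fun _ => hcard₂ _).trans hw,
    hvalid₂.map_iso φ⟩
end

section
/- Let D be a digraph with a 𝒟-decomposition (T, X), let α be a dicolouring of D, let x be a vertex of D, and let c be a colour such that α(v) ≠ c for every vertex v belonging to some bag containing x. Then the colouring obtained from α by recolouring x with c is again a dicolouring of D. -/
variable {V : Type*}

/-!
Suppose the recoloured digraph has a monochromatic dicycle `l`. If `x` is not on `l`, or is its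
only vertex, then `l` is already monochromatic under `α`. Otherwise `l` has colour `c` and a vertex
`v ≠ x`. The vertex set of `l` is strongly connected, so its support in `T` is connected: walking
in it from a bag containing `v` to a bag containing `x`, we enter the bags containing `x` through an
edge witnessed by a vertex `u ≠ x` of `l`. Then `u` shares a bag with `x` and `α u = c`,
contradicting the choice of `c`.
-/

namespace IsDicycle

variable {A B : V → V → Prop} {l : List V}

theorem imp_of_mem_s17 (hl : IsDicycle A l) (h : ∀ a ∈ l, ∀ b ∈ l, A a b → B a b) :
    IsDicycle B l := by
  obtain ⟨hne, hnd, hch, hwrap⟩ := hl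
  refine ⟨hne, hnd, hch.imp_of_mem_imp fun a b ha hb => h a ha b hb, fun a ha b hb => ?_⟩
  exact h a (List.mem_of_mem_getLast? ha) b (List.mem_of_mem_head? hb) (hwrap a ha b hb)

theorem exists_rel (hl : IsDicycle A l) : ∀ v ∈ l, ∃ w, A v w := by
  obtain ⟨-, -, hch, hwrap⟩ := hl
  refine hch.backwards_induction _ _ (fun v w h _ => ⟨w, h⟩) fun hne => ?_
  exact ⟨_, hwrap _ (List.getLast?_eq_some_getLast hne) _ (List.head?_eq_some_head hne)⟩

theorem stronglyConnectedOn_toFinset [DecidableEq V] (hl : IsDicycle A l) :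
    StronglyConnectedOn A l.toFinset := by
  set R := fun a b => A a b ∧ a ∈ l.toFinset ∧ b ∈ l.toFinset
  obtain ⟨hne, -, hch, hwrap⟩ := hl.imp_of_mem_s17 (B := R) fun a ha b hb h =>
    ⟨h, List.mem_toFinset.2 ha, List.mem_toFinset.2 hb⟩
  intro p hp q hq
  have to_last : Relation.ReflTransGen R p (l.getLast hne) :=
    hch.backwards_induction (Relation.ReflTransGen R · (l.getLast hne)) _
      (fun _ _ => .head) (fun _ => .refl) p (List.mem_toFinset.1 hp)
  have from_head : Relation.ReflTransGen R (l.head hne) q :=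
    hch.induction (Relation.ReflTransGen R (l.head hne) ·) _
      (fun _ _ h h' => h'.tail h) (fun _ => .refl) q (List.mem_toFinset.1 hq)
  exact to_last.trans <|
    .head (hwrap _ (List.getLast?_eq_some_getLast hne) _ (List.head?_eq_some_head hne)) from_head

end IsDicycle

theorem IsDicolouring.not_isDicycle {C : Type*} {A : V → V → Prop} {φ : V → C} {c : C}
    {l : List V} (hφ : IsDicolouring A φ) (hl : IsDicycle A l) (hcol : ∀ v ∈ l, φ v = c) :
    False :=
  hφ c ⟨l, hl.imp_of_mem_s17 fun a ha b hb h => ⟨h, hcol a ha, hcol b hb⟩⟩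

theorem stronglyConnectedOn_singleton (A : V → V → Prop) (v : V) :
    StronglyConnectedOn A {v} := by
  intro p hp q hq
  rw [Finset.mem_singleton.1 hp, Finset.mem_singleton.1 hq]

section Decomposition

variable {A : V → V → Prop} {n : ℕ} {T : SimpleGraph (Fin n)} {X : Fin n → Finset V}
  {S : Finset V} {x : V}

theorem exists_bag_mem_ne_of_reflTransGen_supportAdj {a b : Fin n}
    (h : Relation.ReflTransGen (SupportAdj T X S) a b) (hxa : x ∉ X a) (hxb : x ∈ X b) :
    ∃ t, x ∈ X t ∧ ∃ u ∈ S, u ≠ x ∧ u ∈ X t := by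
  induction h with
  | refl => exact absurd hxb hxa
  | @tail b' b _ hadj ih =>
    by_cases hxb' : x ∈ X b'
    · exact ih hxb'
    · obtain ⟨-, u, hu, hub', hub⟩ := hadj
      exact ⟨b, hxb, u, hu, fun hux => hxb' (hux ▸ hub'), hub⟩

theorem IsDDecomp.exists_mem_bag (hdec : IsDDecomp A T X) (v : V) : ∃ t, v ∈ X t := by
  obtain ⟨⟨t, u, hu, hut⟩, -⟩ := hdec.2 {v} (Finset.singleton_nonempty v)
    (stronglyConnectedOn_singleton A v)
  exact ⟨t, Finset.mem_singleton.1 hu ▸ hut⟩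

theorem IsDDecomp.exists_bag_mem_ne (hdec : IsDDecomp A T X) (hS : StronglyConnectedOn A S)
    {v : V} (hx : x ∈ S) (hv : v ∈ S) (hvx : v ≠ x) :
    ∃ t, x ∈ X t ∧ ∃ u ∈ S, u ≠ x ∧ u ∈ X t := by
  obtain ⟨tv, hvt⟩ := hdec.exists_mem_bag v
  by_cases hxt : x ∈ X tv
  · exact ⟨tv, hxt, v, hv, hvx, hvt⟩
  obtain ⟨tx, hxt'⟩ := hdec.exists_mem_bag x
  obtain ⟨-, hconn⟩ := hdec.2 S ⟨x, hx⟩ hS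
  exact exists_bag_mem_ne_of_reflTransGen_supportAdj
    (hconn tv tx ⟨v, hv, hvt⟩ ⟨x, hx, hxt'⟩) hxt hxt'

end Decomposition

theorem stmt17 [DecidableEq V] (A : V → V → Prop) {n : ℕ}
    (T : SimpleGraph (Fin n)) (X : Fin n → Finset V) (hdec : IsDDecomp A T X)
    {C : Type*} (α : V → C) (hα : IsDicolouring A α) (x : V) (c : C)
    (hc : ∀ t, x ∈ X t → ∀ v ∈ X t, α v ≠ c) :
    IsDicolouring A (Function.update α x c) := by
  intro c' ⟨l, hl⟩
  have hA : IsDicycle A l := hl.imp_of_mem_s17 fun _ _ _ _ h => h.1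
  have hcol : ∀ v ∈ l, Function.update α x c v = c' := fun v hv =>
    (hl.exists_rel v hv).elim fun _ h => h.2.1
  have hcol_ne : ∀ v ∈ l, v ≠ x → α v = c' := fun v hv hvx => by
    simpa [Function.update_of_ne hvx] using hcol v hv
  by_cases hx : x ∈ l
  · have hc' : c' = c := by simpa using (hcol x hx).symm
    by_cases hv : ∃ v ∈ l, v ≠ x
    · obtain ⟨v, hv, hvx⟩ := hv
      obtain ⟨t, hxt, u, hu, hux, hut⟩ := hdec.exists_bag_mem_ne hA.stronglyConnectedOn_toFinset
        (List.mem_toFinset.2 hx) (List.mem_toFinset.2 hv) hvx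
      exact hc t hxt u hut (hc' ▸ hcol_ne u (List.mem_toFinset.1 hu) hux)
    · have hall : ∀ v ∈ l, v = x := by simpa using hv
      exact hα.not_isDicycle hA (c := α x) fun v hv' => by rw [hall v hv']
  · exact hα.not_isDicycle hA fun v hv => hcol_ne v hv (ne_of_mem_of_not_mem hv hx)
end
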